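/- arXiv:2011.10954 — 10 statements merged into one kernel-verified Lean document; each statement's English description precedes it below -/
import Mathlib

section
/- For any positive integers $m, l, k$ with $m \mid l \mid k$: if $l/m$ is even then $T_l^k \circ S_m^l(X) = S_m^k(X)$, and if $l/m$ is odd then $S_l^k \circ S_m^l(X) = S_m^k(X)$. -/
open Polynomial

noncomputable def Tpoly (p l k : ℕ) : Polynomial (ZMod p) :=
  ∑ i ∈ Finset.range (k / l), X ^ p ^ (l * i)

noncomputable def Spoly (p l k : ℕ) : Polynomial (ZMod p) :=
  ∑ i ∈ Finset.range (k / l), C ((-1 : ZMod p) ^ i) * X ^ p ^ (l * i)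

noncomputable def linAssoc (p : ℕ) (l : Polynomial (ZMod p)) : Polynomial (ZMod p) :=
  ∑ i ∈ l.support, C (l.coeff i) * X ^ p ^ i

lemma sum_range_mul_aux {M : Type*} [AddCommMonoid M] (f : ℕ → M) (a b : ℕ) :
    ∑ t ∈ Finset.range (a * b), f t
      = ∑ i ∈ Finset.range a, ∑ j ∈ Finset.range b, f (b * i + j) := by
  induction a with
  | zero => simp
  | succ n ih =>
      rw [Finset.sum_range_succ, ← ih, Nat.succ_mul, Finset.sum_range_add]
      congr 1
      exact Finset.sum_congr rfl fun j _ => by ring_nf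

lemma spoly_pow (p : ℕ) (hp : p.Prime) (m l n : ℕ) :
    (Spoly p m l) ^ p ^ n
      = ∑ j ∈ Finset.range (l / m), C ((-1 : ZMod p) ^ j) * X ^ p ^ (m * j + n) := by
  haveI := Fact.mk hp
  rw [Spoly, sum_pow_char_pow]
  refine Finset.sum_congr rfl fun j _ => ?_
  rw [mul_pow, ← C_pow, ZMod.pow_card_pow, ← pow_mul, ← pow_add]

theorem stmt1 (p : ℕ) (hp : p.Prime) (m l k : ℕ) (hm : 0 < m) (hl : 0 < l) (hk : 0 < k)
    (hml : m ∣ l) (hlk : l ∣ k) :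
    (Even (l / m) → (Tpoly p l k).comp (Spoly p m l) = Spoly p m k) ∧
    (Odd (l / m) → (Spoly p l k).comp (Spoly p m l) = Spoly p m k) := by
  haveI := Fact.mk hp
  have hmb : m * (l / m) = l := Nat.mul_div_cancel' hml
  have hkm : k / m = (k / l) * (l / m) := by
    refine Nat.div_eq_of_eq_mul_left hm ?_
    rw [mul_assoc, mul_comm (l / m) m, hmb, Nat.div_mul_cancel hlk]
  have key : ∀ ε : ZMod p,
      (∑ i ∈ Finset.range (k / l), C (ε ^ i) * X ^ p ^ (l * i)).comp (Spoly p m l)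
        = ∑ i ∈ Finset.range (k / l), ∑ j ∈ Finset.range (l / m),
            C (ε ^ i * (-1 : ZMod p) ^ j) * X ^ p ^ (m * j + l * i) := by
    intro ε
    rw [Polynomial.sum_comp]
    refine Finset.sum_congr rfl fun i _ => ?_
    rw [mul_comp, C_comp, pow_comp, X_comp, spoly_pow p hp, Finset.mul_sum]
    refine Finset.sum_congr rfl fun j _ => ?_
    rw [C_mul]; ring
  have rhs : ∀ ε : ZMod p, (∀ i : ℕ, ε ^ i = (-1 : ZMod p) ^ ((l / m) * i)) →
      Spoly p m k = ∑ i ∈ Finset.range (k / l), ∑ j ∈ Finset.range (l / m),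
        C (ε ^ i * (-1 : ZMod p) ^ j) * X ^ p ^ (m * j + l * i) := by
    intro ε hε
    rw [Spoly, hkm, sum_range_mul_aux (fun t => C ((-1 : ZMod p) ^ t) * X ^ p ^ (m * t))]
    refine Finset.sum_congr rfl fun i _ => Finset.sum_congr rfl fun j _ => ?_
    have h1 : m * (l / m * i + j) = m * j + l * i := by
      calc m * (l / m * i + j) = m * (l / m) * i + m * j := by ring
      _ = m * j + l * i := by rw [hmb]; exact Nat.add_comm _ _
    rw [pow_add, ← hε, h1]
  constructor
  · intro he
    have h1 := key 1
    have h2 := rhs 1 (fun i => by rw [one_pow, pow_mul, Even.neg_one_pow he, one_pow])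
    simp only [one_pow, map_one, one_mul] at h1 h2
    rw [Tpoly]
    exact h1.trans h2.symm
  · intro ho
    have h2 := rhs (-1) (fun i => by rw [pow_mul, Odd.neg_one_pow ho])
    rw [Spoly]
    exact (key (-1)).trans h2.symm
end

section
/- For positive integers $l \mid k$: if $k/l$ is even then $S_l^k \circ T_l^{2l}(X) = S_k^{2k}(X)$, and if $k/l$ is odd then $S_l^k \circ T_l^{2l}(X) = T_k^{2k}(X)$. -/
open Polynomial

theorem stmt2 (p : ℕ) (hp : p.Prime) (l k : ℕ) (hl : 0 < l) (hk : 0 < k) (hlk : l ∣ k) :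
    (Even (k / l) → (Spoly p l k).comp (Tpoly p l (2 * l)) = Spoly p k (2 * k)) ∧
    (Odd (k / l) → (Spoly p l k).comp (Tpoly p l (2 * l)) = Tpoly p k (2 * k)) := by
  haveI := Fact.mk hp
  have h2l : 2 * l / l = 2 := Nat.mul_div_cancel 2 hl
  have h2k : 2 * k / k = 2 := Nat.mul_div_cancel 2 hk
  have hT : Tpoly p l (2 * l) = X + X ^ p ^ l := by
    simp [Tpoly, h2l, Finset.sum_range_succ]
  set n := k / l with hn
  have hln : l * n = k := Nat.mul_div_cancel' hlk
  have hcomp : (Spoly p l k).comp (Tpoly p l (2 * l))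
      = X - C ((-1 : ZMod p) ^ n) * X ^ p ^ k := by
    rw [Spoly, hT, ← hn]
    have : ∀ i, (C ((-1 : ZMod p) ^ i) * X ^ p ^ (l * i)).comp (X + X ^ p ^ l)
        = C ((-1 : ZMod p) ^ i) * X ^ p ^ (l * i)
          - C ((-1 : ZMod p) ^ (i + 1)) * X ^ p ^ (l * (i + 1)) := by
      intro i
      rw [mul_comp, C_comp, pow_comp, X_comp, add_pow_char_pow, ← pow_mul, ← pow_add,
        mul_add, pow_succ, mul_neg_one, map_neg, neg_mul, sub_neg_eq_add]
      ring_nf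
    rw [Polynomial.sum_comp]
    simp only [this]
    rw [Finset.sum_range_sub']
    simp [hln]
  refine ⟨fun he => ?_, fun ho => ?_⟩
  · rw [hcomp, he.neg_one_pow, Spoly, h2k]
    simp [Finset.sum_range_succ, sub_eq_add_neg]
  · rw [hcomp, ho.neg_one_pow, Tpoly, h2k]
    simp [Finset.sum_range_succ]
end

section
/- Let $n, k$ be positive integers, $d = \gcd(n,k)$ and $[n,k] = \mathrm{lcm}(n,k)$. Then for every $x \in \mathbb{F}_{p^n}$, $T_k^{[n,k]}(x) = T_d^n(x)$. Moreover, if $[n,k]/k$ is even, then $S_k^{[n,k]}(x) = S_d^n(x)$ for every $x \in \mathbb{F}_{p^n}$. -/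
open Polynomial Finset

section helpers
variable {A : Type*} [AddCommMonoid A]

lemma sum_range_eq_sum_zmod (N : ℕ) [NeZero N] (f : ℕ → A) :
    ∑ i ∈ Finset.range N, f i = ∑ z : ZMod N, f z.val := by
  refine Finset.sum_nbij' (fun i : ℕ => (i : ZMod N)) (fun z => z.val) ?_ ?_ ?_ ?_ ?_
  · intro i _; exact Finset.mem_univ _
  · intro z _; exact Finset.mem_range.mpr (ZMod.val_lt z)
  · intro i hi; exact ZMod.val_cast_of_lt (Finset.mem_range.mp hi)
  · intro z _; simp [ZMod.natCast_val, ZMod.cast_id]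
  · intro i hi; rw [ZMod.val_cast_of_lt (Finset.mem_range.mp hi)]

lemma key_bij (N m : ℕ) (hN : 0 < N) (hm : Nat.Coprime m N) (f : ℕ → A) :
    ∑ i ∈ Finset.range N, f ((m * i) % N) = ∑ i ∈ Finset.range N, f i := by
  haveI : NeZero N := ⟨hN.ne'⟩
  rw [sum_range_eq_sum_zmod N (fun i => f ((m * i) % N)),
    sum_range_eq_sum_zmod N f]
  have h1 : ∀ z : ZMod N, (m * z.val) % N = (((m : ZMod N) * z)).val := by
    intro z
    rw [← ZMod.val_natCast]
    congr 1
    push_cast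
    rw [ZMod.natCast_val, ZMod.cast_id]
  simp_rw [h1]
  exact Fintype.sum_bijective _ ((ZMod.unitOfCoprime m hm).mulLeft_bijective)
    _ _ (fun z => by rw [ZMod.coe_unitOfCoprime])

lemma neg_one_pow_mod_two {R : Type*} [Monoid R] [HasDistribNeg R] (a : ℕ) :
    (-1 : R) ^ a = (-1) ^ (a % 2) := by
  conv_lhs => rw [← Nat.div_add_mod a 2, pow_add, pow_mul]
  simp

end helpers

lemma pow_p_pow_mod {p : ℕ} [Fact p.Prime] {n : ℕ} (hn : 0 < n)
    (x : GaloisField p n) (a : ℕ) : x ^ p ^ a = x ^ p ^ (a % n) := by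
  haveI : Fintype (GaloisField p n) := Fintype.ofFinite _
  have hcard : Fintype.card (GaloisField p n) = p ^ n := by
    rw [← Nat.card_eq_fintype_card]; exact GaloisField.card p n hn.ne'
  have hfix : ∀ y : GaloisField p n, y ^ p ^ n = y := fun y => by
    rw [← hcard]; exact FiniteField.pow_card y
  conv_lhs => rw [← Nat.div_add_mod a n]
  rw [pow_add, pow_mul, pow_mul]
  congr 1
  induction (a / n) with
  | zero => simp
  | succ q ih => rw [pow_succ, pow_mul, ih, hfix]

theorem stmt4 (p : ℕ) [Fact p.Prime] (n k : ℕ) (hn : 0 < n) (hk : 0 < k)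
    (x : GaloisField p n) :
    aeval x (Tpoly p k (Nat.lcm n k)) = aeval x (Tpoly p (Nat.gcd n k) n) ∧
    (Even (Nat.lcm n k / k) →
      aeval x (Spoly p k (Nat.lcm n k)) = aeval x (Spoly p (Nat.gcd n k) n)) := by
  set d := Nat.gcd n k with hd
  have hd0 : 0 < d := Nat.gcd_pos_of_pos_left k hn
  set N := n / d with hN
  set m := k / d with hm
  have hdn : d ∣ n := Nat.gcd_dvd_left n k
  have hdk : d ∣ k := Nat.gcd_dvd_right n k
  have hN0 : 0 < N := Nat.div_pos (Nat.le_of_dvd hn hdn) hd0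
  have hndN : n = d * N := (Nat.mul_div_cancel' hdn).symm
  have hkdm : k = d * m := (Nat.mul_div_cancel' hdk).symm
  have hcop : Nat.Coprime m N := Nat.coprime_comm.mp (Nat.coprime_div_gcd_div_gcd hd0)
  have hlcm : Nat.lcm n k / k = N := by
    have h1 : Nat.lcm n k = N * k := by
      have := Nat.gcd_mul_lcm n k
      have h2 : d * (N * k) = d * Nat.lcm n k := by
        rw [← mul_assoc, ← hndN, this]
      exact (Nat.eq_of_mul_eq_mul_left hd0 h2).symm
    rw [h1, Nat.mul_div_cancel _ hk]
  have hmod : ∀ i, (k * i) % n = d * ((m * i) % N) := by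
    intro i
    rw [hndN, hkdm, mul_assoc, Nat.mul_mod_mul_left]
  constructor
  · rw [Tpoly, Tpoly, map_sum, map_sum, hlcm, ← hN]
    simp_rw [map_pow, aeval_X]
    calc ∑ i ∈ range N, x ^ p ^ (k * i)
        = ∑ i ∈ range N, x ^ p ^ (d * ((m * i) % N)) := by
          refine Finset.sum_congr rfl fun i _ => ?_
          rw [pow_p_pow_mod hn, hmod]
      _ = ∑ i ∈ range N, x ^ p ^ (d * i) := key_bij N m hN0 hcop (fun j => x ^ p ^ (d * j))
  · intro heven
    rw [hlcm] at heven
    have hmodd : m % 2 = 1 := by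
      rcases Nat.mod_two_eq_zero_or_one m with h | h
      · exfalso
        have h2m : 2 ∣ m := Nat.dvd_of_mod_eq_zero h
        have h2N : 2 ∣ N := heven.two_dvd
        have h2d : (2:ℕ) ∣ Nat.gcd m N := Nat.dvd_gcd h2m heven.two_dvd
        rw [Nat.Coprime] at hcop
        omega
      · exact h
    rw [Spoly, Spoly, map_sum, map_sum, hlcm, ← hN]
    simp only [map_mul, map_pow, aeval_X, aeval_C, map_neg, map_one]
    calc ∑ i ∈ range N, (-1 : GaloisField p n) ^ i * x ^ p ^ (k * i)
        = ∑ i ∈ range N, (-1 : GaloisField p n) ^ ((m * i) % N) * x ^ p ^ (d * ((m * i) % N)) := by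
          refine Finset.sum_congr rfl fun i _ => ?_
          congr 1
          · have hpar : ((m * i) % N) % 2 = i % 2 := by
              rw [Nat.mod_mod_of_dvd _ heven.two_dvd, Nat.mul_mod, hmodd, one_mul, Nat.mod_mod]
            rw [neg_one_pow_mod_two ((m * i) % N), hpar, ← neg_one_pow_mod_two i]
          · rw [pow_p_pow_mod hn, hmod]
      _ = ∑ i ∈ range N, (-1 : GaloisField p n) ^ i * x ^ p ^ (d * i) :=
          key_bij N m hN0 hcop (fun j => (-1 : GaloisField p n) ^ j * x ^ p ^ (d * j))
end

section
/- Let $L, L'$ be $p$-linearized polynomials over $\mathbb{F}_p$ with $L \circ L'(X) = X - X^{p^k} = S_k^{2k}(X)$ for some positive integer $k$. Then the set of roots of $L$ in an algebraic closure of $\mathbb{F}_p$ equals $L'(\mathbb{F}_{p^k})$, the image of $\mathbb{F}_{p^k}$ under $L'$. -/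
open Polynomial

theorem stmt7 (p : ℕ) [Fact p.Prime] (k : ℕ) (hk : 0 < k) (l l' : Polynomial (ZMod p))
    (h : (linAssoc p l).comp (linAssoc p l') = X - X ^ p ^ k) :
    {x : AlgebraicClosure (ZMod p) | aeval x (linAssoc p l) = 0} =
      (fun x => aeval x (linAssoc p l')) ''
        {x : AlgebraicClosure (ZMod p) | x ^ p ^ k = x} := by
  have hp := Fact.out (p := p.Prime)
  have hpk2 : 2 ≤ p ^ k := by
    calc 2 = 2 ^ 1 := rfl
    _ ≤ p ^ k := Nat.pow_le_pow_left hp.two_le k |>.trans' (Nat.pow_le_pow_right (by norm_num) hk) |>.trans le_rfl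
  -- l' is not constant
  have hnc : ∀ c : ZMod p, linAssoc p l' ≠ C c := by
    intro c hc
    rw [hc, comp_C] at h
    have h2 := congrArg (fun q => q.coeff (p ^ k)) h
    simp only [coeff_C, coeff_sub, coeff_X, coeff_X_pow,
      if_neg (show ¬ p ^ k = 0 by omega), if_neg (show ¬ (1 : ℕ) = p ^ k by omega),
      if_pos rfl, if_true] at h2
    exact one_ne_zero (show (1 : ZMod p) = 0 by linear_combination h2)
  ext y
  simp only [Set.mem_setOf_eq, Set.mem_image]
  constructor
  · intro hy
    have hdeg0 : (linAssoc p l').natDegree ≠ 0 := by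
      intro hd
      exact hnc _ (eq_C_of_natDegree_eq_zero hd)
    set q : Polynomial (AlgebraicClosure (ZMod p)) :=
      (linAssoc p l').map (algebraMap (ZMod p) (AlgebraicClosure (ZMod p))) - C y with hq
    have hmapdeg : 0 < ((linAssoc p l').map (algebraMap (ZMod p) (AlgebraicClosure (ZMod p)))).degree := by
      rw [degree_map_eq_of_injective (algebraMap (ZMod p) (AlgebraicClosure (ZMod p))).injective]
      exact natDegree_pos_iff_degree_pos.mp (Nat.pos_of_ne_zero hdeg0)
    have hqdeg : q.degree ≠ 0 := by
      rw [hq, degree_sub_C hmapdeg]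
      exact ne_of_gt hmapdeg
    obtain ⟨z, hz⟩ := IsAlgClosed.exists_root q hqdeg
    have hz' : aeval z (linAssoc p l') = y := by
      have := hz
      simp only [hq, IsRoot, eval_sub, eval_C, eval_map, sub_eq_zero] at this
      rw [aeval_def]; exact this
    refine ⟨z, ?_, hz'⟩
    have hcomp : aeval z ((linAssoc p l).comp (linAssoc p l')) = 0 := by
      rw [aeval_comp, hz', hy]
    rw [h] at hcomp
    simp only [map_sub, map_pow, aeval_X, sub_eq_zero] at hcomp
    exact hcomp.symm
  · rintro ⟨x, hx, rfl⟩
    have : aeval x ((linAssoc p l).comp (linAssoc p l')) = 0 := by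
      rw [h]
      simp [hx]
    rwa [aeval_comp] at this
end

section
/- With notation as follows: $L$ a $p$-linearized polynomial over $\mathbb{F}_p$ without multiple roots, $k$ such that $S_k^{2k} = L \circ L'$ for a $p$-linearized $L'$, $d = \gcd(n,k)$, $w = \gcd(l', t_d^k)$ (gcd of conventional $p$-associates), $u = l'/w$, $v = t_d^k/w$, and $U, V$ the linearized $p$-associates of $u, v$. Then $U \circ L = S_d^{2d} \circ V$. -/
open Polynomial

section aux

variable {p : ℕ} [Fact p.Prime]

lemma linAssoc_eq_range (l : Polynomial (ZMod p)) {N : ℕ} (hN : l.natDegree < N) :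
    linAssoc p l = ∑ i ∈ Finset.range N, C (l.coeff i) * X ^ p ^ i := by
  rw [linAssoc]
  refine Finset.sum_subset (fun i hi => Finset.mem_range.2
    (lt_of_le_of_lt (Polynomial.le_natDegree_of_mem_supp i hi) hN)) ?_
  intro i _ hi
  rw [Polynomial.notMem_support_iff.1 hi, map_zero, zero_mul]

lemma linAssoc_add (a b : Polynomial (ZMod p)) :
    linAssoc p (a + b) = linAssoc p a + linAssoc p b := by
  set N := max a.natDegree b.natDegree + 1 with hN
  have h1 : a.natDegree < N := lt_of_le_of_lt (le_max_left _ _) (Nat.lt_succ_self _)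
  have h2 : b.natDegree < N := lt_of_le_of_lt (le_max_right _ _) (Nat.lt_succ_self _)
  have h3 : (a + b).natDegree < N :=
    lt_of_le_of_lt (Polynomial.natDegree_add_le a b) (Nat.lt_succ_self _)
  rw [linAssoc_eq_range a h1, linAssoc_eq_range b h2, linAssoc_eq_range _ h3,
    ← Finset.sum_add_distrib]
  exact Finset.sum_congr rfl fun i _ => by rw [Polynomial.coeff_add, map_add, add_mul]

lemma linAssoc_zero : linAssoc p 0 = 0 := by simp [linAssoc]

lemma linAssoc_C_mul (c : ZMod p) (a : Polynomial (ZMod p)) :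
    linAssoc p (C c * a) = C c * linAssoc p a := by
  have h1 : (C c * a).natDegree < a.natDegree + 1 :=
    lt_of_le_of_lt (Polynomial.natDegree_C_mul_le c a) (Nat.lt_succ_self _)
  rw [linAssoc_eq_range _ h1, linAssoc_eq_range a (Nat.lt_succ_self _), Finset.mul_sum]
  exact Finset.sum_congr rfl fun i _ => by rw [Polynomial.coeff_C_mul, map_mul, mul_assoc]

lemma linAssoc_neg (a : Polynomial (ZMod p)) : linAssoc p (-a) = -linAssoc p a := by
  have := linAssoc_C_mul (-1) a
  simpa using this

lemma linAssoc_sub (a b : Polynomial (ZMod p)) :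
    linAssoc p (a - b) = linAssoc p a - linAssoc p b := by
  rw [sub_eq_add_neg, linAssoc_add, linAssoc_neg, sub_eq_add_neg]

lemma linAssoc_one : linAssoc p 1 = X := by
  rw [linAssoc_eq_range (N := 1) 1 (by simp), Finset.sum_range_one]
  simp

lemma linAssoc_X_mul (b : Polynomial (ZMod p)) :
    linAssoc p (X * b) = (linAssoc p b) ^ p := by
  set N := b.natDegree + 1 with hN
  have h1 : (X * b).natDegree < N + 1 := by
    refine lt_of_le_of_lt (Polynomial.natDegree_mul_le) ?_
    simp [hN, Polynomial.natDegree_X]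
    omega
  rw [linAssoc_eq_range _ h1, linAssoc_eq_range b (Nat.lt_succ_self _),
    Finset.sum_range_succ']
  have hchar : CharP (Polynomial (ZMod p)) p := inferInstance
  rw [sum_pow_char]
  simp only [pow_zero, pow_one]
  rw [Polynomial.mul_coeff_zero, Polynomial.coeff_X_zero, zero_mul, map_zero, zero_mul, add_zero]
  refine Finset.sum_congr rfl fun i _ => ?_
  rw [Polynomial.coeff_X_mul, mul_pow, ← map_pow, ZMod.pow_card, ← pow_mul, ← pow_succ]

lemma linAssoc_X_pow_mul (n : ℕ) (b : Polynomial (ZMod p)) :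
    linAssoc p (X ^ n * b) = (linAssoc p b) ^ p ^ n := by
  induction n with
  | zero => simp
  | succ n ih =>
    have : (X : Polynomial (ZMod p)) ^ (n + 1) * b = X * (X ^ n * b) := by ring
    rw [this, linAssoc_X_mul, ih, ← pow_mul, ← pow_succ]

lemma linAssoc_X_pow (n : ℕ) : linAssoc p (X ^ n) = X ^ p ^ n := by
  have := linAssoc_X_pow_mul (p := p) n 1
  rw [mul_one, linAssoc_one] at this
  exact this

lemma linAssoc_mul (a b : Polynomial (ZMod p)) :
    linAssoc p (a * b) = (linAssoc p a).comp (linAssoc p b) := by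
  induction a using Polynomial.induction_on' with
  | add a1 a2 ih1 ih2 =>
    rw [add_mul, linAssoc_add, linAssoc_add, Polynomial.add_comp, ih1, ih2]
  | monomial n c =>
    rw [← Polynomial.C_mul_X_pow_eq_monomial, mul_assoc, linAssoc_C_mul,
      linAssoc_X_pow_mul, linAssoc_C_mul, linAssoc_X_pow, Polynomial.mul_comp,
      Polynomial.C_comp, Polynomial.pow_comp, Polynomial.X_comp]

lemma linAssoc_coeff (l : Polynomial (ZMod p)) (i : ℕ) :
    (linAssoc p l).coeff (p ^ i) = l.coeff i := by
  have hp2 : 2 ≤ p := (Fact.out : p.Prime).two_le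
  set N := max l.natDegree i + 1 with hN
  have h1 : l.natDegree < N := lt_of_le_of_lt (le_max_left _ _) (Nat.lt_succ_self _)
  have h2 : i < N := lt_of_le_of_lt (le_max_right _ _) (Nat.lt_succ_self _)
  rw [linAssoc_eq_range l h1, Polynomial.finset_sum_coeff]
  rw [Finset.sum_eq_single i]
  · simp
  · intro j _ hj
    rw [Polynomial.coeff_C_mul, Polynomial.coeff_X_pow, if_neg, mul_zero]
    exact fun hpe => hj ((Nat.pow_right_injective hp2 hpe).symm)
  · intro hi; exact absurd (Finset.mem_range.2 h2) hi

lemma linAssoc_injective : Function.Injective (linAssoc p) := by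
  intro a b hab
  ext i
  rw [← linAssoc_coeff a i, ← linAssoc_coeff b i, hab]

end aux

theorem stmt8 (p : ℕ) [Fact p.Prime] (n k : ℕ) (hn : 0 < n) (hk : 0 < k)
    (l l' : Polynomial (ZMod p)) (hsqf : Squarefree (linAssoc p l))
    (h : (linAssoc p l).comp (linAssoc p l') = X - X ^ p ^ k)
    (d : ℕ) (hd : d = Nat.gcd n k)
    (t w u v : Polynomial (ZMod p))
    (ht : t = ∑ i ∈ Finset.range (k / d), X ^ (d * i))
    (hw : w = gcd l' t) (hu : u = l' / w) (hv : v = t / w) :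
    (linAssoc p u).comp (linAssoc p l) =
      ((X : Polynomial (ZMod p)) - X ^ p ^ d).comp (linAssoc p v) := by
  have hdk : d ∣ k := hd ▸ Nat.gcd_dvd_right n k
  have hmul : l * l' = 1 - X ^ k := by
    apply linAssoc_injective
    rw [linAssoc_mul, h, linAssoc_sub, linAssoc_one, linAssoc_X_pow]
  have ht' : (1 - X ^ d) * t = 1 - X ^ k := by
    have hgeom := geom_sum_mul ((X : Polynomial (ZMod p)) ^ d) (k / d)
    have h2 : (((X : Polynomial (ZMod p)) ^ d) ^ (k / d)) = X ^ k := by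
      rw [← pow_mul, Nat.mul_div_cancel' hdk]
    rw [h2] at hgeom
    have h3 : t = ∑ i ∈ Finset.range (k / d), ((X : Polynomial (ZMod p)) ^ d) ^ i := by
      rw [ht]; exact Finset.sum_congr rfl fun i _ => by rw [← pow_mul]
    rw [h3]
    linear_combination -hgeom
  have hne : (1 - X ^ k : Polynomial (ZMod p)) ≠ 0 := by
    intro h0
    have := congrArg (fun q => Polynomial.coeff q k) h0
    simp [Polynomial.coeff_one, hk.ne'] at this
  have hl'0 : l' ≠ 0 := by
    intro h0
    rw [h0, mul_zero] at hmul
    exact hne hmul.symm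
  have hw0 : w ≠ 0 := by
    rw [hw]
    simp [gcd_eq_zero_iff, hl'0]
  have hu' : l' = w * u := by
    rw [hu]
    exact (EuclideanDomain.mul_div_cancel' hw0 (hw ▸ gcd_dvd_left l' t)).symm
  have hv' : t = w * v := by
    rw [hv]
    exact (EuclideanDomain.mul_div_cancel' hw0 (hw ▸ gcd_dvd_right l' t)).symm
  have hkey : u * l = (1 - X ^ d) * v := by
    have h1 : l * l' = (1 - X ^ d) * t := hmul.trans ht'.symm
    rw [hu', hv'] at h1
    have h2 : w * (u * l) = w * ((1 - X ^ d) * v) := by linear_combination h1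
    exact mul_left_cancel₀ hw0 h2
  rw [← linAssoc_mul, hkey, linAssoc_mul, linAssoc_sub, linAssoc_one, linAssoc_X_pow]
end

section
/- Assume $p \nmid k/d$ where $d = \gcd(n,k)$, and let $\delta \in \mathbb{F}_{p^{2n}}$ satisfy $\delta - \delta^{p^n} = 1$. Let $L, L'$ be $p$-linearized polynomials over $\mathbb{F}_p$ with $L \circ L'(X) = X - X^{p^k}$, and suppose $L'(T_d^n(a)) = 0$ for $a \in \mathbb{F}_{p^n}$. Then $x_0 = \frac{d}{k} \cdot L'(T_k^{[n,k]}(\delta \cdot a))$ lies in $\mathbb{F}_{p^n}$ and satisfies $L(x_0) = a$, where $d/k$ is interpreted as the inverse of $k/d$ modulo $p$. -/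
open Polynomial

set_option linter.unusedSectionVars false

section Aux
variable {p : ℕ} [Fact p.Prime] {F : Type*} [Field F] [Algebra (ZMod p) F] [CharP F p]

lemma algMap_pow_pn (c : ZMod p) (m : ℕ) :
    (algebraMap (ZMod p) (GaloisField p (2 * n)) c) ^ p ^ m = algebraMap (ZMod p) (GaloisField p (2 * n)) c := by
  induction m with
  | zero => simp
  | succ m ih => rw [pow_succ, pow_mul, ih, ← map_pow, ZMod.pow_card]

lemma sum_pow_pn {ι : Type*} (s : Finset ι) (f : ι → F) (m : ℕ) :
    (∑ i ∈ s, f i) ^ p ^ m = ∑ i ∈ s, f i ^ p ^ m := by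
  simpa only [iterateFrobenius_def] using map_sum (iterateFrobenius F p m) f s

lemma aeval_linAssoc (l : Polynomial (ZMod p)) (x : GaloisField p (2 * n)) :
    aeval x (linAssoc p l) = ∑ i ∈ l.support, algebraMap (ZMod p) (GaloisField p (2 * n)) (l.coeff i) * x ^ p ^ i := by
  simp [linAssoc, map_sum]

lemma linAssoc_sub_s12 (l : Polynomial (ZMod p)) (x y : GaloisField p (2 * n)) :
    aeval (x - y) (linAssoc p l) = aeval x (linAssoc p l) - aeval y (linAssoc p l) := by
  simp only [aeval_linAssoc, ← Finset.sum_sub_distrib]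
  exact Finset.sum_congr rfl fun i _ => by rw [sub_pow_char_pow, mul_sub]

lemma linAssoc_frob (l : Polynomial (ZMod p)) (x : GaloisField p (2 * n)) (m : ℕ) :
    (aeval x (linAssoc p l)) ^ p ^ m = aeval (x ^ p ^ m) (linAssoc p l) := by
  rw [aeval_linAssoc, aeval_linAssoc, sum_pow_pn]
  refine Finset.sum_congr rfl fun i _ => ?_
  rw [mul_pow, algMap_pow_pn, ← pow_mul, ← pow_mul, mul_comm (p^i)]

lemma linAssoc_smul (l : Polynomial (ZMod p)) (c : ZMod p) (x : GaloisField p (2 * n)) :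
    aeval (algebraMap (ZMod p) (GaloisField p (2 * n)) c * x) (linAssoc p l)
      = algebraMap (ZMod p) (GaloisField p (2 * n)) c * aeval x (linAssoc p l) := by
  rw [aeval_linAssoc, aeval_linAssoc, Finset.mul_sum]
  refine Finset.sum_congr rfl fun i _ => ?_
  rw [mul_pow, algMap_pow_pn]; ring

lemma aeval_Tpoly (l k : ℕ) (x : GaloisField p (2 * n)) :
    aeval x (Tpoly p l k) = ∑ i ∈ Finset.range (k / l), x ^ p ^ (l * i) := by
  simp [Tpoly, map_sum]

lemma pow_pn_mul {x : F} {n : ℕ} (hx : x ^ p ^ n = x) (j : ℕ) : x ^ p ^ (n * j) = x := by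
  induction j with
  | zero => simp
  | succ j ih => rw [mul_add, mul_one, pow_add, pow_mul, ih, hx]

lemma pow_pn_mod {x : F} {n : ℕ} (hx : x ^ p ^ n = x) (m : ℕ) :
    x ^ p ^ m = x ^ p ^ (m % n) := by
  conv_lhs => rw [← Nat.div_add_mod m n]
  rw [pow_add, pow_mul, pow_pn_mul hx]

end Aux

section Key
variable {p : ℕ} [Fact p.Prime] {F : Type*} [Field F] [Algebra (ZMod p) F] [CharP F p]

lemma sum_range_zmod {n' : ℕ} [NeZero n'] (f : ZMod n' → F) :
    ∑ i ∈ Finset.range n', f (i : ZMod n') = ∑ x : ZMod n', f x := by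
  refine Finset.sum_nbij' (fun i => (i : ZMod n')) (fun x => x.val) ?_ ?_ ?_ ?_ ?_
  · intro i _; exact Finset.mem_univ _
  · intro x _; exact Finset.mem_range.mpr (ZMod.val_lt x)
  · intro i hi; exact ZMod.val_natCast_of_lt (Finset.mem_range.mp hi)
  · intro x _; exact ZMod.natCast_rightInverse x
  · intro i _; rfl

lemma key_sum (a : F) (n d n' k' : ℕ) (hnn : n = d * n') (hcop : Nat.Coprime k' n')
    (hn' : 0 < n') (ha : a ^ p ^ n = a) :
    ∑ i ∈ Finset.range n', a ^ p ^ (d * (k' * i)) = ∑ i ∈ Finset.range n', a ^ p ^ (d * i) := by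
  haveI : NeZero n' := ⟨hn'.ne'⟩
  set G : ZMod n' → F := fun x => a ^ p ^ (d * x.val) with hG
  have hstep : ∀ j : ℕ, a ^ p ^ (d * j) = G ((j : ZMod n')) := by
    intro j
    have hdj : d * j = n * (j / n') + d * (j % n') := by
      conv_lhs => rw [← Nat.div_add_mod j n']
      rw [hnn]; ring
    rw [hdj, pow_add, pow_mul, pow_pn_mul ha, hG]
    simp [ZMod.val_natCast]
  have hu : ∀ i : ℕ, a ^ p ^ (d * (k' * i)) = G ((ZMod.unitOfCoprime k' hcop : ZMod n') * (i : ZMod n')) := by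
    intro i
    rw [hstep (k' * i), ZMod.coe_unitOfCoprime, Nat.cast_mul]
  calc ∑ i ∈ Finset.range n', a ^ p ^ (d * (k' * i))
      = ∑ i ∈ Finset.range n', G ((ZMod.unitOfCoprime k' hcop : ZMod n') * (i : ZMod n')) :=
        Finset.sum_congr rfl fun i _ => hu i
    _ = ∑ x : ZMod n', G ((ZMod.unitOfCoprime k' hcop : ZMod n') * x) :=
        sum_range_zmod (fun z => G ((ZMod.unitOfCoprime k' hcop : ZMod n') * z))
    _ = ∑ x : ZMod n', G x :=
        Fintype.sum_bijective _ (ZMod.unitOfCoprime k' hcop).mulLeft_bijective _ _ fun x => rfl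
    _ = ∑ i ∈ Finset.range n', a ^ p ^ (d * i) := by
        rw [← sum_range_zmod G]
        exact Finset.sum_congr rfl fun i _ => (hstep i).symm

end Key

theorem stmt12 (p : ℕ) [Fact p.Prime] (n k : ℕ) (hn : 0 < n) (hk : 0 < k)
    (d : ℕ) (hd : d = Nat.gcd n k) (hpd : ¬ p ∣ k / d)
    (l l' : Polynomial (ZMod p))
    (h : (linAssoc p l).comp (linAssoc p l') = X - X ^ p ^ k)
    (δ : GaloisField p (2 * n)) (hδ : δ - δ ^ p ^ n = 1)
    (a : GaloisField p (2 * n)) (ha : a ^ p ^ n = a)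
    (ha' : aeval (aeval a (Tpoly p d n)) (linAssoc p l') = 0)
    (x₀ : GaloisField p (2 * n))
    (hx₀ : x₀ = algebraMap (ZMod p) (GaloisField p (2 * n)) (((k / d : ℕ) : ZMod p))⁻¹ *
        aeval (aeval (δ * a) (Tpoly p k (Nat.lcm n k))) (linAssoc p l')) :
    x₀ ^ p ^ n = x₀ ∧ aeval x₀ (linAssoc p l) = a := by
  have hFd : (GaloisField p (2 * n)) = GaloisField p (2 * n) := rfl
  -- numeric facts
  have hdpos : 0 < d := hd ▸ Nat.gcd_pos_of_pos_left k hn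
  have hdn : d ∣ n := hd ▸ Nat.gcd_dvd_left n k
  have hdk : d ∣ k := hd ▸ Nat.gcd_dvd_right n k
  set n' := n / d with hn'
  set k' := k / d with hk'
  have hneq : n = d * n' := (Nat.mul_div_cancel' hdn).symm
  have hkeq : k = d * k' := (Nat.mul_div_cancel' hdk).symm
  have hn'pos : 0 < n' := Nat.div_pos (Nat.le_of_dvd hn hdn) hdpos
  have hk'pos : 0 < k' := Nat.div_pos (Nat.le_of_dvd hk hdk) hdpos
  have hcop : Nat.Coprime k' n' := by
    have := Nat.coprime_div_gcd_div_gcd (hd ▸ hdpos : 0 < Nat.gcd n k)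
    exact (Nat.Coprime.symm (by rwa [← hd] at this))
  set m := Nat.lcm n k with hm
  have hmk : m = n' * k := by
    rw [hm, Nat.lcm, ← hd]
    conv_lhs => rw [hneq, Nat.mul_assoc]
    rw [Nat.mul_div_cancel_left _ hdpos]
  have hmn : m = n * k' := by
    rw [hm, Nat.lcm, ← hd]
    conv_lhs => rw [hkeq, Nat.mul_comm n (d * k'), Nat.mul_assoc]
    rw [Nat.mul_div_cancel_left _ hdpos, Nat.mul_comm]
  have hmdk : m / k = n' := by rw [hmk, Nat.mul_div_cancel _ hk]
  -- field facts
  have hδn : δ ^ p ^ n = δ - 1 := by linear_combination -hδ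
  have hδj : ∀ j : ℕ, δ ^ p ^ (n * j) = δ - (j : GaloisField p (2 * n)) := by
    intro j
    induction j with
    | zero => simp
    | succ j ih =>
      have : (n * (j + 1)) = n * j + n := by ring
      rw [this, pow_add, pow_mul, ih, sub_pow_char_pow, hδn]
      have hj : ((j : GaloisField p (2 * n))) ^ p ^ n = (j : GaloisField p (2 * n)) := by
        rw [← map_natCast (algebraMap (ZMod p) (GaloisField p (2 * n))), algMap_pow_pn]
      rw [hj]; push_cast; ring
  set b := δ * a with hb
  set c := algebraMap (ZMod p) (GaloisField p (2 * n)) (((k' : ℕ) : ZMod p))⁻¹ with hc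
  set u := aeval b (Tpoly p k m) with hu
  set y := aeval u (linAssoc p l') with hy
  have hx₀' : x₀ = c * y := hx₀
  have hu_sum : u = ∑ i ∈ Finset.range n', b ^ p ^ (k * i) := by
    rw [hu, aeval_Tpoly, hmdk]
  have hbn : b ^ p ^ n = b - a := by
    rw [hb, mul_pow, hδn, ha, sub_mul, one_mul]
  have hT : ∑ i ∈ Finset.range n', a ^ p ^ (k * i) = aeval a (Tpoly p d n) := by
    rw [aeval_Tpoly, ← hn']
    calc ∑ i ∈ Finset.range n', a ^ p ^ (k * i)
        = ∑ i ∈ Finset.range n', a ^ p ^ (d * (k' * i)) := by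
          refine Finset.sum_congr rfl fun i _ => ?_
          rw [hkeq]; ring_nf
      _ = ∑ i ∈ Finset.range n', a ^ p ^ (d * i) :=
          key_sum a n d n' k' hneq hcop hn'pos ha
  have hun : u ^ p ^ n = u - aeval a (Tpoly p d n) := by
    rw [hu_sum, sum_pow_pn, ← hT, ← Finset.sum_sub_distrib]
    refine Finset.sum_congr rfl fun i _ => ?_
    rw [← pow_mul, mul_comm (p ^ (k * i)), pow_mul, hbn, sub_pow_char_pow]
  have hyn : y ^ p ^ n = y := by
    rw [hy, linAssoc_frob, hun, linAssoc_sub_s12, ha', sub_zero]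
  constructor
  · rw [hx₀', mul_pow, hc, algMap_pow_pn, hyn]
  · have hLy : aeval y (linAssoc p l) = u - u ^ p ^ k := by
      rw [hy, ← aeval_comp, h]
      simp
    have huk : u - u ^ p ^ k = (k' : GaloisField p (2 * n)) * a := by
      have hfk : u ^ p ^ k = ∑ i ∈ Finset.range n', b ^ p ^ (k * (i + 1)) := by
        rw [hu_sum, sum_pow_pn]
        refine Finset.sum_congr rfl fun i _ => ?_
        rw [← pow_mul, ← pow_add]; ring_nf
      have htel : ∑ i ∈ Finset.range n', b ^ p ^ (k * (i + 1))
          = ∑ i ∈ Finset.range n', b ^ p ^ (k * i) + b ^ p ^ (k * n') - b ^ p ^ (k * 0) := by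
        have h1 := Finset.sum_range_succ' (fun i => b ^ p ^ (k * i)) n'
        have h2 := Finset.sum_range_succ (fun i => b ^ p ^ (k * i)) n'
        rw [h2] at h1
        linear_combination -h1
      have hbm : b ^ p ^ (k * n') = (δ - (k' : GaloisField p (2 * n))) * a := by
        have : k * n' = n * k' := by rw [← hmn, hmk]; ring
        rw [this, hb, mul_pow, hδj, pow_pn_mul ha]
      rw [hfk, hu_sum, htel, hbm]
      simp only [Nat.mul_zero, pow_zero, pow_one, hb]
      ring
    rw [hx₀', hc, linAssoc_smul, hLy, huk]
    have hknz : ((k' : ℕ) : ZMod p) ≠ 0 := by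
      rw [Ne, ZMod.natCast_eq_zero_iff]
      exact hpd
    rw [← map_natCast (algebraMap (ZMod p) (GaloisField p (2 * n))) k', ← mul_assoc,
      ← map_mul, inv_mul_cancel₀ hknz, map_one, one_mul]
end

section
/- Let $d = \gcd(n,k)$, $\delta \in \mathbb{F}_{p^n}$ with $T_d^n(\delta) = 1$, $L, L'$ $p$-linearized polynomials over $\mathbb{F}_p$ with $L \circ L'(X) = X - X^{p^k}$, and $a \in \mathbb{F}_{p^n}$. Define $y = \sum_{i=0}^{n/d - 2} \sum_{j=i+1}^{n/d - 1} \delta^{p^{kj}} U(a)^{p^{ki}}$, where $U$ is the linearized $p$-associate of $u = l'/\gcd(l', t_d^k)$. If $U(T_d^n(a)) = 0$, then $L(L'(y)) = U(a)$. -/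
open Polynomial

/-!
Since `L ∘ L' = X - X^{p^k}`, the claim is `y - y^{p^k} = U(a)`. Write `D j = δ^{p^{kj}}` and
`S i = U(a)^{p^{ki}}`, so `y = ∑_{i<j<m} D j * S i` with `m = n/d`. The Frobenius `x ↦ x^{p^k}`
shifts both indices, so `y - y^{p^k}` telescopes to `S 0 * ∑ D - D 0 * ∑ S` (using `D m = D 0`).
As `k/d` is a unit mod `m`, the stride-`k` orbit sums `∑ D` and `∑ S` are the trace sums
`T_d^n(δ) = 1` and `U(T_d^n(a)) = 0`, the latter because `U` is additive
and commutes with Frobenius.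
-/

open Finset

theorem Function.Periodic.sum_range_mul_of_coprime {M : Type*} [AddCommMonoid M] {f : ℕ → M}
    {m : ℕ} (hf : Function.Periodic f m) {e : ℕ} (he : e.Coprime m) :
    ∑ j ∈ range m, f (e * j) = ∑ j ∈ range m, f j := by
  rcases m.eq_zero_or_pos with rfl | hm
  · simp
  simp_rw [← hf.map_mod_nat (e * _)]
  have hmaps : Set.MapsTo (fun j => e * j % m) (range m) (range m) :=
    fun j _ => mem_range.2 (Nat.mod_lt _ hm)
  have hinj : Set.InjOn (fun j => e * j % m) (range m) := by
    intro i hi j hj hij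
    have := Nat.ModEq.cancel_left_of_coprime he.symm hij
    exact Nat.ModEq.eq_of_lt_of_lt this (mem_range.1 hi) (mem_range.1 hj)
  exact sum_nbij _ hmaps hinj (surjOn_of_injOn_of_card_le _ hmaps hinj le_rfl) fun _ _ => rfl

section Linearized

variable {p : ℕ} [Fact p.Prime] {A : Type*} [CommSemiring A] [Algebra (ZMod p) A]

theorem aeval_pow_prime_pow (f : (ZMod p)[X]) (x : A) (s : ℕ) :
    aeval (x ^ p ^ s) f = aeval x f ^ p ^ s := by
  induction s with
  | zero => simp
  | succ s ih =>
    rw [pow_succ, pow_mul, ← expand_aeval, ZMod.expand_card, map_pow, ih, ← pow_mul,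
      ← pow_succ]

variable [CharP A p]

theorem aeval_linAssoc_sum {ι : Type*} (v : (ZMod p)[X]) (s : Finset ι) (f : ι → A) :
    aeval (∑ i ∈ s, f i) (linAssoc p v) = ∑ i ∈ s, aeval (f i) (linAssoc p v) := by
  simp only [linAssoc, map_sum, map_mul, aeval_C, map_pow, aeval_X, sum_pow_char_pow, mul_sum]
  exact sum_comm

end Linearized

theorem sum_range_sum_Ico_succ {M : Type*} [AddCommMonoid M] (f : ℕ → ℕ → M) (m : ℕ) :
    ∑ i ∈ range (m + 1), ∑ j ∈ Ico (i + 1) (m + 1), f i j =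
      ∑ i ∈ range m, ∑ j ∈ Ico (i + 1) m, f i j + ∑ i ∈ range m, f i m := by
  rw [sum_range_succ, Ico_self, sum_empty, add_zero, ← sum_add_distrib]
  refine sum_congr rfl fun i hi => sum_Ico_succ_top ?_ _
  exact mem_range.1 hi

theorem sum_range_pred_sum_Ico {M : Type*} [AddCommMonoid M] (f : ℕ → ℕ → M) (m : ℕ) :
    ∑ i ∈ range (m - 1), ∑ j ∈ Ico (i + 1) m, f i j =
      ∑ i ∈ range m, ∑ j ∈ Ico (i + 1) m, f i j := by
  cases m with
  | zero => rfl
  | succ m => rw [Nat.add_sub_cancel, sum_range_succ, Ico_self, sum_empty, add_zero]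

theorem sum_range_sum_Ico_mul_sub_shift {R : Type*} [CommRing R] (D S : ℕ → R) (m : ℕ) :
    ∑ i ∈ range m, ∑ j ∈ Ico (i + 1) m, D j * S i
      - ∑ i ∈ range m, ∑ j ∈ Ico (i + 1) m, D (j + 1) * S (i + 1)
      = (∑ j ∈ range m, D j) * S 0 - D m * ∑ i ∈ range m, S i + (D m - D 0) * S 0 := by
  induction m with
  | zero => simp
  | succ m ih =>
    rw [sum_range_sum_Ico_succ (fun i j => D j * S i),
      sum_range_sum_Ico_succ (fun i j => D (j + 1) * S (i + 1)), sum_range_succ D,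
      sum_range_succ S, ← mul_sum, ← mul_sum]
    have hS := (sum_range_succ S m).symm.trans (sum_range_succ' S m)
    linear_combination ih + D (m + 1) * hS

theorem GaloisField.pow_prime_pow_of_dvd {p n s : ℕ} [Fact p.Prime] (hn : n ≠ 0)
    (x : GaloisField p n) (hs : n ∣ s) : x ^ p ^ s = x := by
  obtain ⟨t, rfl⟩ := hs
  have : Fintype (GaloisField p n) := Fintype.ofFinite _
  rw [pow_mul, ← GaloisField.card p n hn, Nat.card_eq_fintype_card, FiniteField.pow_card_pow]

theorem sum_range_pow_prime_pow_mul_eq_aeval_Tpoly {p n : ℕ} [Fact p.Prime] (hn : n ≠ 0)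
    (k : ℕ) (x : GaloisField p n) :
    ∑ j ∈ range (n / n.gcd k), x ^ p ^ (k * j) = aeval x (Tpoly p (n.gcd k) n) := by
  have hd : 0 < n.gcd k := Nat.gcd_pos_of_pos_left k (Nat.pos_of_ne_zero hn)
  have hcop := (Nat.coprime_div_gcd_div_gcd hd).symm
  obtain ⟨e, he⟩ := Nat.gcd_dvd_right n k
  obtain ⟨m, hm⟩ := Nat.gcd_dvd_left n k
  set d := n.gcd k
  have hperiodic : Function.Periodic (fun j => x ^ p ^ (d * j)) m := fun j => by
    dsimp only
    rw [mul_add, pow_add, mul_comm, pow_mul, ← hm, GaloisField.pow_prime_pow_of_dvd hn x dvd_rfl]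
  have hk : ∀ j, k * j = d * (e * j) := fun j => by rw [he, mul_assoc]
  simp only [Tpoly, map_sum, map_pow, aeval_X, hk]
  have hmd : n / d = m := by rw [hm, Nat.mul_div_cancel_left _ hd]
  rw [he, Nat.mul_div_cancel_left _ hd, hmd] at hcop
  rw [hmd]
  exact hperiodic.sum_range_mul_of_coprime hcop

theorem stmt14_general (p : ℕ) [Fact p.Prime] (n k : ℕ) (hn : 0 < n)
    (d : ℕ) (hd : d = Nat.gcd n k)
    (l l' : Polynomial (ZMod p))
    (h : (linAssoc p l).comp (linAssoc p l') = X - X ^ p ^ k)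
    (u : Polynomial (ZMod p))
    (δ : GaloisField p n) (hδ : aeval δ (Tpoly p d n) = 1)
    (a : GaloisField p n)
    (ha : aeval (aeval a (Tpoly p d n)) (linAssoc p u) = 0)
    (y : GaloisField p n)
    (hy : y = ∑ i ∈ Finset.range (n / d - 1), ∑ j ∈ Finset.Ico (i + 1) (n / d),
        δ ^ p ^ (k * j) * (aeval a (linAssoc p u)) ^ p ^ (k * i)) :
    aeval (aeval y (linAssoc p l')) (linAssoc p l) = aeval a (linAssoc p u) := by
  subst hd
  set b := aeval a (linAssoc p u)
  set m := n / n.gcd k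
  have hδ_sum : ∑ j ∈ range m, δ ^ p ^ (k * j) = 1 := by
    rw [sum_range_pow_prime_pow_mul_eq_aeval_Tpoly hn.ne', hδ]
  have hb_sum : ∑ i ∈ range m, b ^ p ^ (k * i) = 0 := by
    rw [← ha, ← sum_range_pow_prime_pow_mul_eq_aeval_Tpoly hn.ne', aeval_linAssoc_sum]
    simp only [aeval_pow_prime_pow]
    rfl
  have hδ_period : δ ^ p ^ (k * m) = δ ^ p ^ (k * 0) := by
    have hkm : k * m = n.lcm k := by
      rw [Nat.lcm, mul_comm n k, Nat.mul_div_assoc k (Nat.gcd_dvd_left n k)]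
    rw [mul_zero, pow_zero, pow_one, hkm,
      GaloisField.pow_prime_pow_of_dvd hn.ne' δ (Nat.dvd_lcm_left n k)]
  have hy_frob : y ^ p ^ k = ∑ i ∈ range (m - 1), ∑ j ∈ Ico (i + 1) m,
      δ ^ p ^ (k * (j + 1)) * b ^ p ^ (k * (i + 1)) := by
    simp_rw [hy, sum_pow_char_pow, mul_pow, ← pow_mul, ← pow_add, mul_add_one]
  rw [← aeval_comp, h, map_sub, map_pow, aeval_X, hy_frob, hy, sum_range_pred_sum_Ico,
    sum_range_pred_sum_Ico, sum_range_sum_Ico_mul_sub_shift (fun j => δ ^ p ^ (k * j)),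
    hδ_period, hδ_sum, hb_sum]
  ring

theorem stmt14 (p : ℕ) [Fact p.Prime] (n k : ℕ) (hn : 0 < n) (hk : 0 < k)
    (d : ℕ) (hd : d = Nat.gcd n k)
    (l l' : Polynomial (ZMod p))
    (h : (linAssoc p l).comp (linAssoc p l') = X - X ^ p ^ k)
    (t w u : Polynomial (ZMod p))
    (ht : t = ∑ i ∈ Finset.range (k / d), X ^ (d * i))
    (hw : w = gcd l' t) (hu : u = l' / w)
    (δ : GaloisField p n) (hδ : aeval δ (Tpoly p d n) = 1)
    (a : GaloisField p n)
    (ha : aeval (aeval a (Tpoly p d n)) (linAssoc p u) = 0)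
    (y : GaloisField p n)
    (hy : y = ∑ i ∈ Finset.range (n / d - 1), ∑ j ∈ Finset.Ico (i + 1) (n / d),
        δ ^ p ^ (k * j) * (aeval a (linAssoc p u)) ^ p ^ (k * i)) :
    aeval (aeval y (linAssoc p l')) (linAssoc p l) = aeval a (linAssoc p u) :=
  stmt14_general p n k hn d hd l l' h u δ hδ a ha y hy
end

section
/- Let $d = \gcd(n,k)$, $e = \gcd(d,l)$ with $l \mid k$. In $\mathbb{F}_p[X]$, $\gcd\left(\frac{X^k - 1}{X^d - 1},\ X^l - 1\right) = X^l - 1$ if $p \mid \frac{k}{\mathrm{lcm}(d,l)}$, and equals $\frac{X^l - 1}{X^e - 1}$ otherwise. -/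
open Polynomial

/-!
Write `e = gcd d l`, `d = e a`, `l = e r` with `a` and `r` coprime, and `c = k / lcm d l`, so that
`k / d = c r`. Modulo `X^l - 1` the power `X^(d i)` only depends on `d i mod l`; as `i` runs over
`r` consecutive integers, `d i mod l` runs exactly once over the multiples of `e` below `l`.
Hence `∑_{i < k/d} X^(d i) ≡ c · S` with `S = ∑_{j < r} X^(e j) = (X^l - 1)/(X^e - 1)`, and the
gcd with `X^l - 1` is `X^l - 1` when `c = 0` in `𝔽_p`, and `S` otherwise.
-/

open Finset

theorem sum_range_pow_mul_of_coprime {R : Type*} [Semiring R] {y : R} {r a : ℕ}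
    (hy : y ^ r = 1) (ha : a.Coprime r) :
    ∑ i ∈ range r, y ^ (a * i) = ∑ i ∈ range r, y ^ i := by
  rcases r.eq_zero_or_pos with rfl | hr
  · simp
  have hmaps : Set.MapsTo (fun i => a * i % r) (range r) (range r) :=
    fun i _ => mem_range.2 (Nat.mod_lt _ hr)
  have hinj : Set.InjOn (fun i => a * i % r) (range r) := fun i hi j hj hij =>
    (Nat.ModEq.cancel_left_of_coprime (Nat.coprime_comm.1 ha) hij).eq_of_lt_of_lt
      (mem_range.1 hi) (mem_range.1 hj)
  exact sum_nbij _ hmaps hinj (surjOn_of_injOn_of_card_le _ hmaps hinj le_rfl)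
    fun i _ => pow_eq_pow_mod _ hy

theorem geom_sum_range_mul_of_pow_eq_one {R : Type*} [Semiring R] {z : R} {m : ℕ} (hz : z ^ m = 1)
    (c : ℕ) : ∑ i ∈ range (c * m), z ^ i = c * ∑ i ∈ range m, z ^ i := by
  induction c with
  | zero => simp
  | succ c ih =>
    rw [add_mul, one_mul, sum_range_add, ih, Nat.cast_succ, add_one_mul]
    simp [pow_add, pow_mul', hz]

theorem X_pow_sub_one_dvd_sum_X_pow_sub {R : Type*} [CommRing R] {a e r : ℕ} (ha : a.Coprime r)
    (c : ℕ) : (X ^ (e * r) - 1 : R[X]) ∣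
      ∑ i ∈ range (c * r), X ^ (e * a * i) - (c : R[X]) * ∑ i ∈ range r, X ^ (e * i) := by
  rw [← AdjoinRoot.mk_eq_zero, map_sub, sub_eq_zero]
  set y := AdjoinRoot.root (X ^ (e * r) - 1 : R[X]) ^ e
  have hy : y ^ r = 1 := by
    rw [← sub_eq_zero, ← pow_mul, ← AdjoinRoot.mk_X, ← map_pow, ← map_one (AdjoinRoot.mk _),
      ← map_sub, AdjoinRoot.mk_self]
  have hya : (y ^ a) ^ r = 1 := by rw [pow_right_comm, hy, one_pow]
  simp only [map_sum, map_mul, map_pow, map_natCast, AdjoinRoot.mk_X, pow_mul]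
  rw [geom_sum_range_mul_of_pow_eq_one hya, ← sum_range_pow_mul_of_coprime hy ha]
  simp only [pow_mul]

theorem sum_range_X_pow_mul_mul_X_pow_sub_one {R : Type*} [Ring R] (e r : ℕ) :
    (∑ i ∈ range r, X ^ (e * i) : R[X]) * (X ^ e - 1) = X ^ (e * r) - 1 := by
  simp only [pow_mul, geom_sum_mul]

theorem monic_sum_range_X_pow_mul {R : Type*} [Ring R] {e r : ℕ} (he : e ≠ 0) (hr : r ≠ 0) :
    (∑ i ∈ range r, X ^ (e * i) : R[X]).Monic := by
  refine (monic_X_pow_sub_C (1 : R) he).of_mul_monic_right ?_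
  rw [C_1, sum_range_X_pow_mul_mul_X_pow_sub_one]
  simpa using monic_X_pow_sub_C (1 : R) (mul_ne_zero he hr)

theorem Nat.div_eq_div_mul_mul_of_dvd {k d r : ℕ} (h : d * r ∣ k) (hr : 0 < r) :
    k / d = k / (d * r) * r := by
  obtain ⟨c, rfl⟩ := h
  rcases d.eq_zero_or_pos with rfl | hd
  · simp
  rw [mul_assoc, Nat.mul_div_cancel_left _ hd, ← mul_assoc,
    Nat.mul_div_cancel_left _ (by positivity), mul_comm]

theorem stmt15_general (p : ℕ) [Fact p.Prime] (n k l : ℕ) (hl : 0 < l)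
    (hlk : l ∣ k) (d e : ℕ) (hd : d = Nat.gcd n k) (he : e = Nat.gcd d l) :
    gcd (∑ i ∈ Finset.range (k / d), (X : Polynomial (ZMod p)) ^ (d * i))
        ((X : Polynomial (ZMod p)) ^ l - 1) =
      if p ∣ k / Nat.lcm d l then (X : Polynomial (ZMod p)) ^ l - 1
      else ∑ i ∈ Finset.range (l / e), (X : Polynomial (ZMod p)) ^ (e * i) := by
  have he0 : 0 < e := he ▸ Nat.gcd_pos_of_pos_right d hl
  have hed : e * (d / e) = d := Nat.mul_div_cancel' (he ▸ Nat.gcd_dvd_left d l)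
  have hel : e * (l / e) = l := Nat.mul_div_cancel' (he ▸ Nat.gcd_dvd_right d l)
  have hr : 0 < l / e := Nat.div_pos (Nat.le_of_dvd hl ⟨_, hel.symm⟩) he0
  have hlcm : Nat.lcm d l = d * (l / e) := he ▸ Nat.mul_div_assoc d (Nat.gcd_dvd_right d l)
  have hkd : k / d = k / Nat.lcm d l * (l / e) := by
    have hdvd : Nat.lcm d l ∣ k := Nat.lcm_dvd (hd ▸ Nat.gcd_dvd_right n k) hlk
    rw [hlcm] at hdvd ⊢
    exact Nat.div_eq_div_mul_mul_of_dvd hdvd hr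
  have hcong := X_pow_sub_one_dvd_sum_X_pow_sub (R := ZMod p) (e := e)
    (he ▸ Nat.coprime_div_gcd_div_gcd (he ▸ he0)) (k / Nat.lcm d l)
  rw [hed, hel, ← hkd] at hcong
  rw [gcd_eq_of_dvd_sub_left hcong]
  split_ifs with hpc
  · rw [(CharP.cast_eq_zero_iff (ZMod p)[X] p _).2 hpc, zero_mul, gcd_zero_left]
    simpa using (monic_X_pow_sub_C (1 : ZMod p) hl.ne').normalize_eq_self
  · have hu : IsUnit (↑(k / Nat.lcm d l) : (ZMod p)[X]) := by
      rw [← C_eq_natCast]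
      exact isUnit_C.2 (Ne.isUnit (mt (CharP.cast_eq_zero_iff (ZMod p) p _).1 hpc))
    have hS := (monic_sum_range_X_pow_mul (R := ZMod p) he0.ne' hr.ne').normalize_eq_self
    rw [(associated_unit_mul_left _ _ hu).gcd_eq_left, gcd_eq_left_iff _ _ hS]
    exact ⟨X ^ e - 1, by rw [sum_range_X_pow_mul_mul_X_pow_sub_one, hel]⟩

theorem stmt15 (p : ℕ) [Fact p.Prime] (n k l : ℕ) (hn : 0 < n) (hk : 0 < k) (hl : 0 < l)
    (hlk : l ∣ k) (d e : ℕ) (hd : d = Nat.gcd n k) (he : e = Nat.gcd d l) :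
    gcd (∑ i ∈ Finset.range (k / d), (X : Polynomial (ZMod p)) ^ (d * i))
        ((X : Polynomial (ZMod p)) ^ l - 1) =
      if p ∣ k / Nat.lcm d l then (X : Polynomial (ZMod p)) ^ l - 1
      else ∑ i ∈ Finset.range (l / e), (X : Polynomial (ZMod p)) ^ (e * i) :=
  stmt15_general p n k l hl hlk d e hd he
end

section
/- Let $L(X) = X + X^2 + X^8$ over $\mathbb{F}_2$ and let $n$ be a positive integer with $7 \nmid n$. Then for every $a \in \mathbb{F}_{2^n}$ the equation $L(x) = a$ has exactly one solution $x \in \mathbb{F}_{2^n}$. -/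
/-!
In characteristic 2 the map `L x = x + x ^ 2 + x ^ 8` is additive, so on the finite field
`GaloisField 2 n` it is bijective as soon as its kernel is trivial. A root `z` of `L` satisfies
`z ^ 8 = z ^ 2 + z`, and squaring this relation repeatedly gives `z ^ 2 ^ 7 = z`
(`X ^ 7 + X + 1` is irreducible over `𝔽₂`). Together with `z ^ 2 ^ n = z` and `gcd 7 n = 1`
this forces `z ^ 2 = z`, i.e. `z ∈ {0, 1}`, and `L 1 = 1 ≠ 0`.
-/

open Function

theorem pow_pow_gcd_eq_self {M : Type*} [Monoid M] {k a b : ℕ} {z : M}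
    (ha : z ^ k ^ a = z) (hb : z ^ k ^ b = z) : z ^ k ^ a.gcd b = z := by
  have hper (m : ℕ) : IsPeriodicPt (· ^ k) m z ↔ z ^ k ^ m = z := by
    rw [IsPeriodicPt, IsFixedPt, pow_iterate]
  exact (hper _).1 (((hper a).2 ha).gcd ((hper b).2 hb))

section CharTwo

variable {R : Type*} [CommRing R] [CharP R 2]

def linearizedL : R →+ R :=
  AddMonoidHom.mk' (fun x => x + x ^ 2 + x ^ 8) fun x y => by
    have h8 : (x + y) ^ 2 ^ 3 = x ^ 2 ^ 3 + y ^ 2 ^ 3 := add_pow_char_pow ..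
    norm_num at h8
    rw [CharTwo.add_sq, h8]
    ring

@[simp]
theorem linearizedL_apply (x : R) : linearizedL x = x + x ^ 2 + x ^ 8 := rfl

theorem pow_two_pow_seven_eq_self_of_linearizedL_eq_zero {z : R} (hz : linearizedL z = 0) :
    z ^ 2 ^ 7 = z := by
  rw [linearizedL_apply] at hz
  have two : (2 : R) = 0 := CharTwo.two_eq_zero
  have h8 : z ^ 8 = z ^ 2 + z := by linear_combination hz - (z ^ 2 + z) * two
  have h16 : z ^ 16 = z ^ 4 + z ^ 2 := by
    linear_combination (z ^ 8 + z ^ 2 + z) * h8 + z ^ 3 * two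
  have h32 : z ^ 32 = z ^ 8 + z ^ 4 := by
    linear_combination (z ^ 16 + z ^ 4 + z ^ 2) * h16 + z ^ 6 * two
  have h64 : z ^ 64 = z ^ 4 + z := by
    linear_combination (z ^ 32 + z ^ 8 + z ^ 4) * h32 + h16 + h8 + (z ^ 12 + z ^ 2) * two
  linear_combination (z ^ 64 + z ^ 4 + z) * h64 + h8 + (z ^ 5 + z ^ 2) * two

theorem eq_zero_of_linearizedL_eq_zero [IsDomain R] {n : ℕ} (h7 : ¬ 7 ∣ n) {z : R}
    (hn : z ^ 2 ^ n = z) (hz : linearizedL z = 0) : z = 0 := by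
  have hcop : Nat.gcd 7 n = 1 := (Nat.Prime.coprime_iff_not_dvd (by norm_num)).2 h7
  have hidem : IsIdempotentElem z := by
    simpa [IsIdempotentElem, sq, hcop] using
      pow_pow_gcd_eq_self (pow_two_pow_seven_eq_self_of_linearizedL_eq_zero hz) hn
  rcases IsIdempotentElem.iff_eq_zero_or_one.1 hidem with rfl | rfl
  · rfl
  · have two : (2 : R) = 0 := CharTwo.two_eq_zero
    rw [linearizedL_apply] at hz
    exact absurd (by linear_combination hz - two) one_ne_zero

end CharTwo

theorem stmt17 (n : ℕ) (hn : 0 < n) (h7 : ¬ (7 ∣ n)) (a : GaloisField 2 n) :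
    ∃! x : GaloisField 2 n, x + x ^ 2 + x ^ 8 = a := by
  have hfrob (x : GaloisField 2 n) : x ^ 2 ^ n = x := by
    have := Fintype.ofFinite (GaloisField 2 n)
    rw [← GaloisField.card 2 n hn.ne', Nat.card_eq_fintype_card, FiniteField.pow_card]
  have hinj : Injective (linearizedL : GaloisField 2 n → GaloisField 2 n) :=
    (injective_iff_map_eq_zero _).2 fun x hx => eq_zero_of_linearizedL_eq_zero h7 (hfrob x) hx
  exact (Finite.injective_iff_bijective.1 hinj).existsUnique a
end

section
/- Let $L(X) = X + X^2 + X^8$ over $\mathbb{F}_2$ and let $n$ be a positive integer with $7 \mid n$. Then the set of roots of $L$ in $\mathbb{F}_{2^n}$ equals $\{x + x^2 + x^4 + x^{16} : x \in \mathbb{F}_{2^7}\}$, and in particular $L$ has exactly $8$ roots in $\mathbb{F}_{2^n}$. -/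
/-!
Write `σ` for the Frobenius `x ↦ x ^ 2`; then `L = 1 + σ + σ³` and `T = 1 + σ + σ² + σ⁴` are
additive, and `L ∘ T = 1 + σ⁷` because `(1 + X + X³)(1 + X + X² + X⁴) = 1 + X⁷` in `𝔽₂[X]`. Hence `T`
maps `𝔽₁₂₈ = ker (1 + σ⁷)` into `ker L`. Since `ker T` has at most `16` elements, `T(𝔽₁₂₈)` has at
least `128 / 16 = 8`, while `L` has degree `8`, so `T(𝔽₁₂₈) = ker L` has exactly `8` elements.
-/

open Polynomial

theorem FiniteField.ncard_setOf_pow_eq_self {K : Type*} [Field K] {p : ℕ} [CharP K p] (hp : 1 < p)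
    {n d : ℕ} (hK : Nat.card K = p ^ n) (hd : d ∣ n) (hd0 : d ≠ 0) :
    {y : K | y ^ p ^ d = y}.ncard = p ^ d := by
  classical
  have : Finite K := Nat.finite_of_card_ne_zero (by rw [hK]; positivity)
  set f : K[X] := X ^ p ^ d - X
  have hf0 : f ≠ 0 := FiniteField.X_pow_card_pow_sub_X_ne_zero K hd0 hp
  have hsplits : f.Splits := by
    refine (Polynomial.splits_X_pow_nat_card_sub_X (K := K)).of_dvd
      (FiniteField.X_pow_card_sub_X_ne_zero K Finite.one_lt_card) ?_
    rw [hK]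
    exact dvd_pow_pow_sub_self_of_dvd hd
  have hnodup : f.roots.Nodup := nodup_roots (galois_poly_separable p _ (dvd_pow_self p hd0))
  have hset : {y : K | y ^ p ^ d = y} = f.roots.toFinset := by
    ext; simp [f, mem_roots hf0, sub_eq_zero]
  rw [hset, Set.ncard_coe_finset, Multiset.toFinset_card_of_nodup hnodup,
    ← hsplits.natDegree_eq_card_roots, FiniteField.X_pow_card_pow_sub_X_natDegree_eq K hd0 hp]

theorem AddMonoidHom.card_le_card_map_mul_card_ker {G H : Type*} [AddGroup G] [Finite G]
    [AddGroup H] (f : G →+ H) (A : AddSubgroup G) :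
    Nat.card A ≤ Nat.card (A.map f) * Nat.card f.ker := by
  set g := f.comp A.subtype
  have hcard : Nat.card A = Nat.card g.ker * Nat.card (A.map f) := by
    rw [← g.ker.card_mul_index, AddSubgroup.index_ker, AddMonoidHom.range_comp,
      AddSubgroup.range_subtype]
  have hker : Nat.card g.ker ≤ Nat.card f.ker :=
    Nat.card_le_card_of_injective (fun x => ⟨x.1.1, x.2⟩) fun _ _ h => by
      ext
      simpa using congrArg (fun y : f.ker => (y : G)) h
  rw [hcard, mul_comm]
  exact Nat.mul_le_mul_left _ hker

def frobeniusSum (R : Type*) [CommSemiring R] (p : ℕ) [ExpChar R p] (s : Finset ℕ) : R →+ R :=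
  ∑ i ∈ s, (iterateFrobenius R p i).toAddMonoidHom

theorem frobeniusSum_apply (R : Type*) [CommSemiring R] (p : ℕ) [ExpChar R p] (s : Finset ℕ)
    (x : R) : frobeniusSum R p s x = ∑ i ∈ s, x ^ p ^ i := by
  simp [frobeniusSum, iterateFrobenius_def]

theorem card_ker_frobeniusSum_le {K : Type*} [CommRing K] [IsDomain K] {p : ℕ} [ExpChar K p]
    (hp : 1 < p) {s : Finset ℕ} {m : ℕ} (hm : m ∈ s) (hs : ∀ i ∈ s, i ≤ m) :
    Nat.card (frobeniusSum K p s).ker ≤ p ^ m := by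
  set q : K[X] := ∑ i ∈ s, X ^ p ^ i
  have hdeg : q.natDegree = p ^ m := by
    refine natDegree_eq_of_le_of_coeff_ne_zero (natDegree_sum_le_of_forall_le _ _ fun i hi =>
      (natDegree_X_pow_le _).trans (Nat.pow_le_pow_right (by omega) (hs i hi))) ?_
    simp [q, coeff_X_pow, (Nat.pow_right_injective hp).eq_iff, hm]
  have hq : q ≠ 0 := ne_zero_of_natDegree_gt (n := 0) (hdeg ▸ by positivity)
  have hker : ((frobeniusSum K p s).ker : Set K) = q.rootSet K := by
    ext; simp [q, mem_rootSet, hq, frobeniusSum_apply]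
  rw [← SetLike.coe_sort_coe, Nat.card_coe_set_eq, hker, ← hdeg]
  exact q.ncard_rootSet_le K

namespace CharTwo

variable {R : Type*} [CommRing R] [CharP R 2]

theorem coe_ker_frobeniusSum_zero_pair {d : ℕ} (hd : d ≠ 0) :
    ((frobeniusSum R 2 {0, d}).ker : Set R) = {y | y ^ 2 ^ d = y} := by
  ext y
  rw [SetLike.mem_coe, AddMonoidHom.mem_ker, frobeniusSum_apply, Finset.sum_pair hd.symm,
    pow_zero, pow_one, CharTwo.add_eq_zero, eq_comm, Set.mem_ofPred_eq]

theorem frobeniusSum_013_comp_0124 :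
    (frobeniusSum R 2 {0, 1, 3}).comp (frobeniusSum R 2 {0, 1, 2, 4}) = frobeniusSum R 2 {0, 7} := by
  ext y
  simp only [AddMonoidHom.comp_apply, frobeniusSum_apply, sum_pow_char_pow, ← pow_mul, ← pow_add]
  simp only [Finset.sum_insert, Finset.mem_insert, Finset.mem_singleton, Finset.sum_singleton,
    Nat.reduceEqDiff, or_self, not_false_eq_true]
  linear_combination (y ^ 2 + y ^ 4 + y ^ 8 + y ^ 16 + y ^ 32) * CharTwo.two_eq_zero (R := R)

end CharTwo

theorem FiniteField.ker_frobeniusSum_013_eq_map {K : Type*} [Field K] [CharP K 2] {n : ℕ}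
    (hK : Nat.card K = 2 ^ n) (h7 : 7 ∣ n) :
    (frobeniusSum K 2 {0, 1, 3}).ker =
        (frobeniusSum K 2 {0, 7}).ker.map (frobeniusSum K 2 {0, 1, 2, 4}) ∧
      Nat.card (frobeniusSum K 2 {0, 1, 3}).ker = 8 := by
  have : Finite K := Nat.finite_of_card_ne_zero (by rw [hK]; positivity)
  set L := frobeniusSum K 2 {0, 1, 3}
  set T := frobeniusSum K 2 {0, 1, 2, 4}
  set M := frobeniusSum K 2 {0, 7}
  have hmaps : M.ker.map T ≤ L.ker := by
    rintro _ ⟨y, hy, rfl⟩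
    rwa [AddMonoidHom.mem_ker, ← AddMonoidHom.comp_apply, CharTwo.frobeniusSum_013_comp_0124]
  have hL : Nat.card L.ker ≤ 2 ^ 3 := card_ker_frobeniusSum_le one_lt_two (by simp) (by decide)
  have hT : Nat.card T.ker ≤ 2 ^ 4 := card_ker_frobeniusSum_le one_lt_two (by simp) (by decide)
  have hM : Nat.card M.ker = 2 ^ 7 := by
    rw [← SetLike.coe_sort_coe, Nat.card_coe_set_eq, CharTwo.coe_ker_frobeniusSum_zero_pair
      (by norm_num), FiniteField.ncard_setOf_pow_eq_self one_lt_two hK h7 (by norm_num)]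
  have hcount := AddMonoidHom.card_le_card_map_mul_card_ker T M.ker
  have himage : 2 ^ 3 ≤ Nat.card (M.ker.map T) := by nlinarith
  have heq := AddSubgroup.eq_of_le_of_card_ge hmaps (hL.trans himage)
  exact ⟨heq.symm, le_antisymm hL (heq ▸ himage)⟩

theorem stmt18 (n : ℕ) (hn : 0 < n) (h7 : 7 ∣ n) :
    {x : GaloisField 2 n | x + x ^ 2 + x ^ 8 = 0} =
        (fun y : GaloisField 2 n => y + y ^ 2 + y ^ 4 + y ^ 16) ''
          {y : GaloisField 2 n | y ^ 2 ^ 7 = y} ∧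
      {x : GaloisField 2 n | x + x ^ 2 + x ^ 8 = 0}.ncard = 8 := by
  obtain ⟨hker, hcard⟩ :=
    FiniteField.ker_frobeniusSum_013_eq_map (GaloisField.card 2 n hn.ne') h7
  have hL : {x : GaloisField 2 n | x + x ^ 2 + x ^ 8 = 0} =
      ((frobeniusSum (GaloisField 2 n) 2 {0, 1, 3}).ker : Set (GaloisField 2 n)) := by
    ext; simp [frobeniusSum_apply, add_assoc]
  have hT : (fun y : GaloisField 2 n => y + y ^ 2 + y ^ 4 + y ^ 16) =
      frobeniusSum (GaloisField 2 n) 2 {0, 1, 2, 4} := by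
    funext; simp [frobeniusSum_apply, add_assoc]
  rw [hL, hT, ← CharTwo.coe_ker_frobeniusSum_zero_pair (by norm_num), ← AddSubgroup.coe_map,
    ← hker, ← Nat.card_coe_set_eq, SetLike.coe_sort_coe]
  exact ⟨rfl, hcard⟩
end
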